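/- Let M = (S, A, P, R, H, μ) be a finite MDP and π : S → A a stationary policy. If H ≥ 2·ln(8 · |S|^{4|S|}), then with γ = 1 − ln(8 · |S|^{4|S|})/H, it holds that (1/(64 · |S|^{8|S|})) · V^π_{M,H} ≤ V^π_{M,γ} ≤ 2 · V^π_{M,H}. -/

import Mathlib

/-!
Write `q h` for the expected reward at step `h`. Cutting a path of length `h`, at each of its
`h + 1` positions, at the last visit to the state occupied there shows
`(h + 1) q h ≤ |S| ∑_{k ≤ h} q k`. Summed against `γ ^ h`, this bounds the discounted reward
collected after step `H` by half of the total as soon as `|S| γ / (1 - γ) ≤ (H + 1 - |S|) / 2`,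
which the choice `1 - γ = log (8 |S| ^ (4 |S|)) / H` guarantees; this gives the upper bound.
The lower bound is `γ ^ H ≥ exp (-2 log (8 |S| ^ (4 |S|))) = 1 / (64 |S| ^ (8 |S|))`.
-/

open Finset

/-- `pReach μ P L s` is the probability `p_L(s, C)` of reaching `s` with exactly `L` steps in the
Markov chain `C = (S, P, μ)`. -/
noncomputable def pReach {S : Type} [Fintype S] (μ : S → ℝ) (P : S → S → ℝ)
    (L : ℕ) (s : S) : ℝ :=
  ∑ T : Fin L → S,
    (fun f : ℕ → S => μ (f 0) * ∏ h ∈ Finset.range L, P (f h) (f (h + 1)))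
      (fun n => if h : n < L then T ⟨n, h⟩ else s)

/-- Finite-horizon value of a stationary policy, written via the induced Markov chain `Pc` and
mean reward function `rc`: `V = Σ_s Σ_{h<L} p_h(s) · E[R(s, π(s))]`. -/
noncomputable def Vfin {S : Type} [Fintype S] (μ : S → ℝ) (Pc : S → S → ℝ) (rc : S → ℝ)
    (L : ℕ) : ℝ :=
  ∑ s : S, (∑ h ∈ Finset.range L, pReach μ Pc h s) * rc s

/-- Discounted value of a stationary policy: `V = Σ_s Σ_{h≥0} γ^h · p_h(s) · E[R(s, π(s))]`. -/
noncomputable def Vdisc {S : Type} [Fintype S] (μ : S → ℝ) (Pc : S → S → ℝ) (rc : S → ℝ)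
    (γ : ℝ) : ℝ :=
  ∑ s : S, (∑' h : ℕ, γ ^ h * pReach μ Pc h s) * rc s

open Matrix

/-- Read with `e` the projection onto a state `v`: the paths of length `k` are split according to
their last visit to `v`, the factor `a * (1 - e)` forbidding any later return. -/
theorem pow_eq_sum_last_visit {R : Type*} [Ring R] (a e : R) (k : ℕ) :
    a ^ k = ∑ x ∈ range (k + 1), a ^ x * e * (a * (1 - e)) ^ (k - x) +
      (1 - e) * (a * (1 - e)) ^ k := by
  induction k with
  | zero => simp
  | succ k ih =>
    have hshift : ∑ x ∈ range (k + 1), a ^ x * e * (a * (1 - e)) ^ (k + 1 - x) =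
        (∑ x ∈ range (k + 1), a ^ x * e * (a * (1 - e)) ^ (k - x)) * (a * (1 - e)) := by
      rw [sum_mul]
      refine sum_congr rfl fun x hx => ?_
      rw [Nat.sub_add_comm (mem_range_succ_iff.1 hx), pow_succ]
      simp only [mul_assoc]
    rw [sum_range_succ, hshift, Nat.sub_self, pow_zero, mul_one, pow_succ (a * (1 - e)),
      ← mul_assoc (1 - e), add_right_comm, ← add_mul, ← ih]
    noncomm_ring

theorem Finset.sum_range_sum_range_sub_sub {M : Type*} [AddCommMonoid M] (f : ℕ → ℕ → M)
    (h : ℕ) :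
    ∑ x ∈ range (h + 1), ∑ t ∈ range (h - x + 1), f x (h - x - t) =
      ∑ k ∈ range (h + 1), ∑ x ∈ range (k + 1), f x (k - x) := by
  rw [sum_comm' (t' := range (h + 1)) (s' := fun t => range (h - t + 1))
    (by intro x t; simp only [mem_range]; omega)]
  conv_rhs => rw [← sum_range_reflect _ (h + 1)]
  refine sum_congr rfl fun t _ => ?_
  rw [add_tsub_cancel_right]
  exact sum_congr rfl fun x _ => by rw [Nat.sub_right_comm]

namespace Matrix

variable {R : Type*} [CommRing R] {S : Type*} [Fintype S] [DecidableEq S]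

/-- `Q` with every transition into `v` deleted (taboo probabilities). -/
def taboo (Q : Matrix S S R) (v : S) : Matrix S S R := Q * (1 - single v v 1)

theorem one_sub_single_mulVec (v : S) (w : S → R) :
    (1 - single v v (1 : R)) *ᵥ w = Function.update w v 0 := by
  ext i
  rcases eq_or_ne i v with rfl | h <;> simp [sub_mulVec, single_mulVec, *]

theorem mulVec_single_mulVec_apply (A : Matrix S S R) (v i : S) (w : S → R) :
    (A *ᵥ single v v 1 *ᵥ w) i = A i v * w v := by
  rw [single_mulVec]
  simp [mulVec, dotProduct, Function.update_apply]

theorem dotProduct_mulVec_single_mulVec (μ : S → R) (A : Matrix S S R) (v : S) (w : S → R) :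
    μ ⬝ᵥ (A *ᵥ single v v 1 *ᵥ w) = (μ ᵥ* A) v * w v := by
  rw [dotProduct_mulVec, single_mulVec]
  simp [dotProduct, Function.update_apply]

theorem pow_mulVec_apply_eq_sum (Q : Matrix S S R) (v : S) (r : S → R) (m : ℕ) :
    (Q ^ m *ᵥ r) v = ∑ t ∈ range (m + 1), (Q ^ t) v v * (taboo Q v ^ (m - t) *ᵥ r) v := by
  conv_lhs => rw [pow_eq_sum_last_visit Q (single v v 1) m]
  simp [add_mulVec, sum_mulVec, mulVec_single_mulVec_apply, ← mulVec_mulVec,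
    one_sub_single_mulVec, taboo]

theorem vecMul_pow_dotProduct_eq_sum (Q : Matrix S S R) (v : S) (μ r : S → R) (k : ℕ) :
    (μ ᵥ* Q ^ k) ⬝ᵥ r = ∑ x ∈ range (k + 1), (μ ᵥ* Q ^ x) v * (taboo Q v ^ (k - x) *ᵥ r) v +
      μ ⬝ᵥ Function.update (taboo Q v ^ k *ᵥ r) v 0 := by
  rw [← dotProduct_mulVec]
  conv_lhs => rw [pow_eq_sum_last_visit Q (single v v 1) k]
  simp [add_mulVec, sum_mulVec, dotProduct_add, dotProduct_sum, dotProduct_mulVec_single_mulVec,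
    ← mulVec_mulVec, one_sub_single_mulVec, taboo]

section Stochastic

variable [PartialOrder R] [IsOrderedRing R] {Q : Matrix S S R}

theorem taboo_pow_mulVec_nonneg (hQ : Q ∈ rowStochastic R S) (v : S) {r : S → R}
    (hr : ∀ i, 0 ≤ r i) (m : ℕ) : ∀ i, 0 ≤ (taboo Q v ^ m *ᵥ r) i := by
  induction m with
  | zero => simpa using hr
  | succ m ih =>
    rw [pow_succ', ← mulVec_mulVec, taboo, ← mulVec_mulVec, one_sub_single_mulVec]
    refine nonneg_mulVec_of_mem_rowStochastic hQ fun i => ?_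
    rw [Function.update_apply]
    split_ifs
    exacts [le_rfl, ih i]

theorem sum_vecMul_pow_mul_taboo_le (hQ : Q ∈ rowStochastic R S) {μ r : S → R}
    (hμ : ∀ i, 0 ≤ μ i) (hr : ∀ i, 0 ≤ r i) (v : S) (k : ℕ) :
    ∑ x ∈ range (k + 1), (μ ᵥ* Q ^ x) v * (taboo Q v ^ (k - x) *ᵥ r) v ≤ (μ ᵥ* Q ^ k) ⬝ᵥ r := by
  rw [vecMul_pow_dotProduct_eq_sum Q v]
  refine le_add_of_nonneg_right (dotProduct_nonneg_of_nonneg hμ fun i => ?_)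
  rw [Function.update_apply]
  split_ifs
  exacts [le_rfl, taboo_pow_mulVec_nonneg hQ v hr k i]

/-- Each position `x ≤ h` of a path is charged to the state `v` visited there. Cutting out the
loop from `x` to the last visit to `v` (weight `(Q ^ t) v v ≤ 1`) leaves a path of length `h - t`
whose last visit to `v` is at time `x`, and for fixed `v` and length these events are disjoint. -/
theorem succ_mul_vecMul_pow_dotProduct_le (hQ : Q ∈ rowStochastic R S) {μ r : S → R}
    (hμ : ∀ i, 0 ≤ μ i) (hr : ∀ i, 0 ≤ r i) (h : ℕ) :
    (h + 1 : R) * ((μ ᵥ* Q ^ h) ⬝ᵥ r) ≤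
      Fintype.card S * ∑ k ∈ range (h + 1), (μ ᵥ* Q ^ k) ⬝ᵥ r := by
  have hsplit : ∀ x ≤ h, (μ ᵥ* Q ^ h) ⬝ᵥ r = ∑ v, (μ ᵥ* Q ^ x) v * (Q ^ (h - x) *ᵥ r) v :=
    fun x hx => by
      change _ = (μ ᵥ* Q ^ x) ⬝ᵥ (Q ^ (h - x) *ᵥ r)
      rw [dotProduct_mulVec, vecMul_vecMul, ← pow_add, Nat.add_sub_cancel' hx]
  calc (h + 1 : R) * ((μ ᵥ* Q ^ h) ⬝ᵥ r)
      = ∑ x ∈ range (h + 1), ∑ v, (μ ᵥ* Q ^ x) v * (Q ^ (h - x) *ᵥ r) v := by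
        rw [← sum_congr rfl fun x hx => hsplit x (mem_range_succ_iff.1 hx)]
        simp
    _ = ∑ v, ∑ x ∈ range (h + 1), ∑ t ∈ range (h - x + 1),
          (μ ᵥ* Q ^ x) v * ((Q ^ t) v v * (taboo Q v ^ (h - x - t) *ᵥ r) v) := by
        rw [sum_comm]
        refine sum_congr rfl fun v _ => sum_congr rfl fun x _ => ?_
        rw [pow_mulVec_apply_eq_sum, mul_sum]
    _ ≤ ∑ v, ∑ x ∈ range (h + 1), ∑ t ∈ range (h - x + 1),
          (μ ᵥ* Q ^ x) v * (taboo Q v ^ (h - x - t) *ᵥ r) v := by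
        refine sum_le_sum fun v _ => sum_le_sum fun x _ => sum_le_sum fun t _ => ?_
        exact mul_le_mul_of_nonneg_left
          (mul_le_of_le_one_left (taboo_pow_mulVec_nonneg hQ v hr _ v)
            (le_one_of_mem_rowStochastic (pow_mem hQ t)))
          (nonneg_vecMul_of_mem_rowStochastic (pow_mem hQ x) hμ v)
    _ = ∑ v, ∑ k ∈ range (h + 1), ∑ x ∈ range (k + 1),
          (μ ᵥ* Q ^ x) v * (taboo Q v ^ (k - x) *ᵥ r) v := by
        refine sum_congr rfl fun v _ => ?_
        exact sum_range_sum_range_sub_sub (fun x s => (μ ᵥ* Q ^ x) v * (taboo Q v ^ s *ᵥ r) v) h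
    _ ≤ ∑ _v : S, ∑ k ∈ range (h + 1), (μ ᵥ* Q ^ k) ⬝ᵥ r :=
        sum_le_sum fun v _ => sum_le_sum fun k _ => sum_vecMul_pow_mul_taboo_le hQ hμ hr v k
    _ = Fintype.card S * ∑ k ∈ range (h + 1), (μ ᵥ* Q ^ k) ⬝ᵥ r := by
        simp

end Stochastic

end Matrix

theorem one_sub_mul_sum_pow_mul_sum_range_add {R : Type*} [CommRing R] (γ : R) (q : ℕ → R)
    (M : ℕ) :
    (1 - γ) * ∑ h ∈ range M, γ ^ h * ∑ i ∈ range h, q i + γ ^ M * ∑ i ∈ range M, q i =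
      γ * ∑ h ∈ range M, γ ^ h * q h := by
  induction M with
  | zero => simp
  | succ M ih =>
    simp only [sum_range_succ]
    linear_combination ih

theorem one_sub_mul_sum_pow_mul_sum_range_le {q : ℕ → ℝ} {γ : ℝ} (hq0 : ∀ h, 0 ≤ q h)
    (hγ0 : 0 ≤ γ) (M : ℕ) :
    (1 - γ) * ∑ h ∈ range M, γ ^ h * ∑ i ∈ range h, q i ≤ γ * ∑ h ∈ range M, γ ^ h * q h := by
  rw [← one_sub_mul_sum_pow_mul_sum_range_add]
  exact le_add_of_nonneg_right (mul_nonneg (pow_nonneg hγ0 _) (sum_nonneg fun i _ => hq0 i))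

/-- Weighted by `γ ^ h`, the growth bound `hq` charges the mass beyond `H` to running totals,
whose discounted sum is at most `γ / (1 - γ)` times the discounted mass; `hγ` makes the charge
at most half of that mass. -/
theorem sum_range_add_pow_mul_le_two_mul_sum {q : ℕ → ℝ} {γ : ℝ} {n H : ℕ}
    (hq0 : ∀ h, 0 ≤ q h) (hq : ∀ h : ℕ, (h + 1 : ℝ) * q h ≤ n * ∑ i ∈ range (h + 1), q i)
    (hγ0 : 0 ≤ γ) (hγ1 : γ < 1) (hnH : n ≤ H) (hγ : 2 * n * γ ≤ (1 - γ) * (H + 1 - n))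
    (M : ℕ) : ∑ h ∈ range (H + M), γ ^ h * q h ≤ 2 * ∑ h ∈ range H, γ ^ h * q h := by
  set G := ∑ h ∈ range (H + M), γ ^ h * q h
  set T := ∑ x ∈ range M, γ ^ (H + x) * q (H + x)
  set A := ∑ h ∈ range (H + M), γ ^ h * ∑ i ∈ range h, q i with hA
  have hG : G = ∑ h ∈ range H, γ ^ h * q h + T := sum_range_add _ _ _
  have htail : ∀ x, ((H : ℝ) + 1 - n) * q (H + x) ≤ n * ∑ i ∈ range (H + x), q i := fun x => by
    have := hq (H + x)
    rw [sum_range_succ] at this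
    push_cast at this
    nlinarith [mul_nonneg (Nat.cast_nonneg (α := ℝ) x) (hq0 (H + x))]
  have hT : ((H : ℝ) + 1 - n) * T ≤ n * A := by
    calc ((H : ℝ) + 1 - n) * T
        = ∑ x ∈ range M, γ ^ (H + x) * (((H : ℝ) + 1 - n) * q (H + x)) := by
          rw [mul_sum]; exact sum_congr rfl fun x _ => by ring
      _ ≤ ∑ x ∈ range M, γ ^ (H + x) * (n * ∑ i ∈ range (H + x), q i) :=
          sum_le_sum fun x _ => mul_le_mul_of_nonneg_left (htail x) (pow_nonneg hγ0 _)
      _ = n * ∑ x ∈ range M, γ ^ (H + x) * ∑ i ∈ range (H + x), q i := by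
          rw [mul_sum]; exact sum_congr rfl fun x _ => by ring
      _ ≤ n * A := by
          gcongr
          rw [hA, sum_range_add]
          exact le_add_of_nonneg_left (sum_nonneg fun h _ =>
            mul_nonneg (pow_nonneg hγ0 h) (sum_nonneg fun i _ => hq0 i))
  have hc : 0 < (1 - γ) * ((H : ℝ) + 1 - n) := by
    have : (n : ℝ) ≤ H := by exact_mod_cast hnH
    exact mul_pos (by linarith) (by linarith)
  have key : (1 - γ) * ((H : ℝ) + 1 - n) * (2 * T) ≤ (1 - γ) * ((H : ℝ) + 1 - n) * G :=
    calc (1 - γ) * ((H : ℝ) + 1 - n) * (2 * T) = 2 * (1 - γ) * (((H : ℝ) + 1 - n) * T) := by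
          ring
      _ ≤ 2 * (1 - γ) * (n * A) := by gcongr
      _ = 2 * n * ((1 - γ) * A) := by ring
      _ ≤ 2 * n * (γ * G) :=
          mul_le_mul_of_nonneg_left (one_sub_mul_sum_pow_mul_sum_range_le hq0 hγ0 _) (by positivity)
      _ = 2 * n * γ * G := by ring
      _ ≤ (1 - γ) * ((H : ℝ) + 1 - n) * G := by
          gcongr
          exact sum_nonneg fun h _ => mul_nonneg (pow_nonneg hγ0 h) (hq0 h)
  linarith [le_of_mul_le_mul_left key hc]

theorem tsum_pow_mul_le_two_mul_sum {q : ℕ → ℝ} {γ : ℝ} {n H : ℕ} (hq0 : ∀ h, 0 ≤ q h)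
    (hq : ∀ h : ℕ, (h + 1 : ℝ) * q h ≤ n * ∑ i ∈ range (h + 1), q i)
    (hγ0 : 0 ≤ γ) (hγ1 : γ < 1) (hnH : n ≤ H) (hγ : 2 * n * γ ≤ (1 - γ) * (H + 1 - n)) :
    ∑' h, γ ^ h * q h ≤ 2 * ∑ h ∈ range H, γ ^ h * q h := by
  have hterm : ∀ h, 0 ≤ γ ^ h * q h := fun h => mul_nonneg (pow_nonneg hγ0 h) (hq0 h)
  refine Real.tsum_le_of_sum_range_le hterm fun N => le_trans ?_
    (sum_range_add_pow_mul_le_two_mul_sum hq0 hq hγ0 hγ1 hnH hγ N)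
  exact sum_le_sum_of_subset_of_nonneg (range_mono (by omega)) fun h _ _ => hterm h

theorem exp_neg_two_mul_le_one_sub {t : ℝ} (ht0 : 0 ≤ t) (ht : t ≤ 1 / 2) :
    Real.exp (-(2 * t)) ≤ 1 - t := by
  rw [Real.exp_neg, inv_le_iff_one_le_mul₀ (Real.exp_pos _)]
  nlinarith [Real.add_one_le_exp (2 * t)]

theorem inv_sq_le_one_sub_log_div_pow {K : ℝ} (hK : 1 ≤ K) {H : ℕ} (hH : 2 * Real.log K ≤ H) :
    (K ^ 2)⁻¹ ≤ (1 - Real.log K / H) ^ H := by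
  have hL : 0 ≤ Real.log K := Real.log_nonneg hK
  rcases Nat.eq_zero_or_pos H with rfl | hH0
  · simpa using inv_le_one_of_one_le₀ (one_le_pow₀ hK)
  have hH0' : (0 : ℝ) < H := by exact_mod_cast hH0
  calc (K ^ 2)⁻¹ = Real.exp (-(2 * (Real.log K / H))) ^ H := by
        rw [← Real.exp_nat_mul, show (H : ℝ) * -(2 * (Real.log K / H)) = -(2 * Real.log K) by
          field_simp, Real.exp_neg, show 2 * Real.log K = Real.log (K ^ 2) by simp [Real.log_pow],
          Real.exp_log (by positivity)]
    _ ≤ (1 - Real.log K / H) ^ H :=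
        pow_le_pow_left₀ (Real.exp_nonneg _) (exp_neg_two_mul_le_one_sub (by positivity)
          (by rw [div_le_iff₀ hH0']; linarith)) H

theorem one_sub_div_nonneg_and_lt_one {L : ℝ} {H : ℕ} (hL : 0 < L) (hH : 2 * L ≤ H) :
    0 ≤ 1 - L / H ∧ 1 - L / H < 1 := by
  have hH0 : (0 : ℝ) < H := by linarith
  have : L / H ≤ 1 / 2 := by rw [div_le_iff₀ hH0]; linarith
  exact ⟨by linarith, by linarith [div_pos hL hH0]⟩

theorem tsum_bounds_of_succ_mul_le {q : ℕ → ℝ} {n H : ℕ} {K : ℝ} (hq0 : ∀ h, 0 ≤ q h)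
    (hq : ∀ h : ℕ, (h + 1 : ℝ) * q h ≤ n * ∑ i ∈ range (h + 1), q i)
    (hsum : Summable fun h => (1 - Real.log K / H) ^ h * q h)
    (hK : 1 < K) (hnK : 2 * n ≤ Real.log K) (hH : 2 * Real.log K ≤ H) :
    (K ^ 2)⁻¹ * ∑ h ∈ range H, q h ≤ ∑' h, (1 - Real.log K / H) ^ h * q h ∧
      ∑' h, (1 - Real.log K / H) ^ h * q h ≤ 2 * ∑ h ∈ range H, q h := by
  set L := Real.log K
  set γ := 1 - L / H with hγ
  have hL : 0 < L := Real.log_pos hK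
  have hH0 : (0 : ℝ) < H := by linarith
  obtain ⟨hγ0, hγ1⟩ := one_sub_div_nonneg_and_lt_one hL hH
  constructor
  · calc (K ^ 2)⁻¹ * ∑ h ∈ range H, q h ≤ γ ^ H * ∑ h ∈ range H, q h := by
          gcongr
          · exact sum_nonneg fun h _ => hq0 h
          · exact inv_sq_le_one_sub_log_div_pow hK.le hH
      _ ≤ ∑ h ∈ range H, γ ^ h * q h := by
          rw [mul_sum]
          exact sum_le_sum fun h hh => mul_le_mul_of_nonneg_right
            (pow_le_pow_of_le_one hγ0 hγ1.le (mem_range.1 hh).le) (hq0 h)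
      _ ≤ ∑' h, γ ^ h * q h :=
          hsum.sum_le_tsum _ fun h _ => mul_nonneg (pow_nonneg hγ0 h) (hq0 h)
  · have hnH : n ≤ H := by exact_mod_cast (show (n : ℝ) ≤ H by linarith)
    have hcond : 2 * n * γ ≤ (1 - γ) * (H + 1 - n) := by
      rw [hγ, sub_sub_cancel, ← mul_le_mul_iff_of_pos_left hH0]
      field_simp
      nlinarith [mul_nonneg (sub_nonneg.2 hnK) (show (0 : ℝ) ≤ H + 1 - n by linarith)]
    calc ∑' h, γ ^ h * q h ≤ 2 * ∑ h ∈ range H, γ ^ h * q h :=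
          tsum_pow_mul_le_two_mul_sum hq0 hq hγ0 hγ1 hnH hcond
      _ ≤ 2 * ∑ h ∈ range H, q h := by
          gcongr with h
          exact mul_le_of_le_one_left (hq0 h) (pow_le_one₀ hγ0 hγ1.le)

theorem one_lt_eight_mul_natCast_pow (n : ℕ) : 1 < 8 * (n : ℝ) ^ (4 * n) := by
  rcases Nat.eq_zero_or_pos n with rfl | hn
  · norm_num
  · have : (1 : ℝ) ≤ (n : ℝ) ^ (4 * n) := one_le_pow₀ (by exact_mod_cast hn)
    linarith

theorem two_mul_le_log_eight_mul_natCast_pow (n : ℕ) :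
    2 * (n : ℝ) ≤ Real.log (8 * (n : ℝ) ^ (4 * n)) := by
  rcases Nat.eq_zero_or_pos n with rfl | hn
  · simpa using (Real.log_pos (by norm_num : (1 : ℝ) < 8)).le
  have hn' : (0 : ℝ) < n := by exact_mod_cast hn
  have hlog8 : 2 ≤ Real.log 8 := by
    have : Real.log 8 = 3 * Real.log 2 := by
      rw [show (8 : ℝ) = 2 ^ 3 by norm_num, Real.log_pow]; norm_num
    linarith [Real.log_two_gt_d9]
  have hlogn := Real.one_sub_inv_le_log_of_pos hn'
  have hn1 : (1 : ℝ) ≤ n := by exact_mod_cast hn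
  rw [Real.log_mul (by norm_num) (by positivity), Real.log_pow]
  push_cast
  have : (n : ℝ) * (n : ℝ)⁻¹ = 1 := mul_inv_cancel₀ hn'.ne'
  nlinarith

section MarkovChain

variable {S : Type} [Fintype S]

theorem pReach_succ (μ : S → ℝ) (P : S → S → ℝ) (L : ℕ) (s : S) :
    pReach μ P (L + 1) s = pReach (μ ᵥ* Matrix.of P) P L s := by
  rw [pReach, ← (Fin.consEquiv fun _ => S).sum_comp, Fintype.sum_prod_type, sum_comm, pReach]
  refine sum_congr rfl fun T _ => ?_
  have hcons : ∀ (t : S) (n : ℕ),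
      (if h : n + 1 < L + 1 then (Fin.cons t T : Fin (L + 1) → S) ⟨n + 1, h⟩ else s) =
        if h : n < L then T ⟨n, h⟩ else s := fun t n => by
    by_cases h : n < L
    · rw [dif_pos (Nat.succ_lt_succ h), dif_pos h]; rfl
    · rw [dif_neg (by omega), dif_neg h]
  simp only [Fin.consEquiv_apply, prod_range_succ', hcons, vecMul, dotProduct, of_apply, sum_mul]
  refine sum_congr rfl fun t _ => ?_
  simp only [Nat.zero_lt_succ, dif_pos, ← hcons t 0, Fin.zero_eta, Fin.cons_zero]
  ring

variable [DecidableEq S]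

theorem pReach_eq_vecMul_pow (μ : S → ℝ) (P : S → S → ℝ) (L : ℕ) :
    pReach μ P L = μ ᵥ* Matrix.of P ^ L := by
  induction L generalizing μ with
  | zero => ext s; simp [pReach]
  | succ L ih => ext s; rw [pReach_succ, ih, pow_succ', vecMul_vecMul]

theorem Vfin_eq_sum_dotProduct (μ : S → ℝ) (P : S → S → ℝ) (r : S → ℝ) (H : ℕ) :
    Vfin μ P r H = ∑ h ∈ range H, (μ ᵥ* Matrix.of P ^ h) ⬝ᵥ r := by
  simp only [Vfin, pReach_eq_vecMul_pow, sum_mul, dotProduct]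
  exact sum_comm

theorem hasSum_Vdisc {μ : S → ℝ} {P : S → S → ℝ} (hP : Matrix.of P ∈ rowStochastic ℝ S)
    (hμ : ∀ i, 0 ≤ μ i) (r : S → ℝ) {γ : ℝ} (hγ0 : 0 ≤ γ) (hγ1 : γ < 1) :
    HasSum (fun h => γ ^ h * ((μ ᵥ* Matrix.of P ^ h) ⬝ᵥ r)) (Vdisc μ P r γ) := by
  have hp0 : ∀ h s, 0 ≤ (μ ᵥ* Matrix.of P ^ h) s := fun h =>
    nonneg_vecMul_of_mem_rowStochastic (pow_mem hP h) hμ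
  have hp1 : ∀ h s, (μ ᵥ* Matrix.of P ^ h) s ≤ μ ⬝ᵥ 1 := fun h s => by
    rw [← one_vecMul_of_mem_rowStochastic (pow_mem hP h), dotProduct_mulVec]
    simpa [dotProduct] using single_le_sum (fun i _ => hp0 h i) (mem_univ s)
  have hsum : ∀ s, Summable fun h => γ ^ h * pReach μ P h s := fun s => by
    refine Summable.of_nonneg_of_le (fun h => ?_) (fun h => ?_)
      ((summable_geometric_of_lt_one hγ0 hγ1).mul_right (μ ⬝ᵥ 1))
    · rw [pReach_eq_vecMul_pow]; exact mul_nonneg (pow_nonneg hγ0 h) (hp0 h s)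
    · rw [pReach_eq_vecMul_pow]; exact mul_le_mul_of_nonneg_left (hp1 h s) (pow_nonneg hγ0 h)
  refine (hasSum_sum fun s _ => (hsum s).hasSum.mul_right (r s)).congr_fun fun h => ?_
  simp only [dotProduct, mul_sum, pReach_eq_vecMul_pow, mul_assoc]

end MarkovChain

theorem stmt4_general {S A : Type} [Fintype S]
    (μ : S → ℝ) (P : S → A → S → ℝ) (Rmean : S → A → ℝ) (H : ℕ)
    (hμ0 : ∀ s, 0 ≤ μ s)
    (hP0 : ∀ s a s', 0 ≤ P s a s') (hP1 : ∀ s a, ∑ s', P s a s' = 1)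
    (hR : ∀ s a, Rmean s a ∈ Set.Icc (0 : ℝ) 1)
    (π : S → A)
    (hH : 2 * Real.log (8 * (Fintype.card S : ℝ) ^ (4 * Fintype.card S)) ≤ (H : ℝ)) :
    (1 / (64 * (Fintype.card S : ℝ) ^ (8 * Fintype.card S))) *
        Vfin μ (fun s s' => P s (π s) s') (fun s => Rmean s (π s)) H ≤
      Vdisc μ (fun s s' => P s (π s) s') (fun s => Rmean s (π s))
        (1 - Real.log (8 * (Fintype.card S : ℝ) ^ (4 * Fintype.card S)) / H) ∧
    Vdisc μ (fun s s' => P s (π s) s') (fun s => Rmean s (π s))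
        (1 - Real.log (8 * (Fintype.card S : ℝ) ^ (4 * Fintype.card S)) / H) ≤
      2 * Vfin μ (fun s s' => P s (π s) s') (fun s => Rmean s (π s)) H := by
  classical
  set n := Fintype.card S
  have hK := one_lt_eight_mul_natCast_pow n
  have hQ : of (fun s s' => P s (π s) s') ∈ rowStochastic ℝ S :=
    mem_rowStochastic_iff_sum.2 ⟨fun s s' => hP0 s (π s) s', fun s => hP1 s (π s)⟩
  have hr : ∀ s, 0 ≤ Rmean s (π s) := fun s => (hR s (π s)).1
  obtain ⟨hγ0, hγ1⟩ := one_sub_div_nonneg_and_lt_one (Real.log_pos hK) hH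
  have hV := hasSum_Vdisc hQ hμ0 (fun s => Rmean s (π s)) hγ0 hγ1
  rw [Vfin_eq_sum_dotProduct, ← hV.tsum_eq,
    show 64 * (n : ℝ) ^ (8 * n) = (8 * (n : ℝ) ^ (4 * n)) ^ 2 by ring, one_div]
  exact tsum_bounds_of_succ_mul_le
    (fun h => dotProduct_nonneg_of_nonneg (nonneg_vecMul_of_mem_rowStochastic (pow_mem hQ h) hμ0) hr)
    (succ_mul_vecMul_pow_dotProduct_le hQ hμ0 hr) hV.summable hK
    (two_mul_le_log_eight_mul_natCast_pow n) hH

theorem stmt4 {S A : Type} [Fintype S]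
    (μ : S → ℝ) (P : S → A → S → ℝ) (Rmean : S → A → ℝ) (H : ℕ)
    (hμ0 : ∀ s, 0 ≤ μ s) (hμ1 : ∑ s, μ s = 1)
    (hP0 : ∀ s a s', 0 ≤ P s a s') (hP1 : ∀ s a, ∑ s', P s a s' = 1)
    (hR : ∀ s a, Rmean s a ∈ Set.Icc (0 : ℝ) 1)
    (π : S → A)
    (hH : 2 * Real.log (8 * (Fintype.card S : ℝ) ^ (4 * Fintype.card S)) ≤ (H : ℝ)) :
    (1 / (64 * (Fintype.card S : ℝ) ^ (8 * Fintype.card S))) *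
        Vfin μ (fun s s' => P s (π s) s') (fun s => Rmean s (π s)) H ≤
      Vdisc μ (fun s s' => P s (π s) s') (fun s => Rmean s (π s))
        (1 - Real.log (8 * (Fintype.card S : ℝ) ^ (4 * Fintype.card S)) / H) ∧
    Vdisc μ (fun s s' => P s (π s) s') (fun s => Rmean s (π s))
        (1 - Real.log (8 * (Fintype.card S : ℝ) ^ (4 * Fintype.card S)) / H) ≤
      2 * Vfin μ (fun s s' => P s (π s) s') (fun s => Rmean s (π s)) H :=
  stmt4_general μ P Rmean H hμ0 hP0 hP1 hR π hH
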